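/- arXiv:1703.08797 — 2 statements merged into one kernel-verified Lean document; each statement's English description precedes it below -/
import Mathlib

section
/- Let b_l = −(1/√2) log( (k−l) l / (2β) ) for l = 1,…,k−1, and define constants γ_j by −γ_j = γ_{k−j+1} = (1/2) Σ_{i=j}^{k−j} b_i for j ≤ k/2. Then the functions ρ̃_j⁰(t) = (j − (k+1)/2) η(t) + γ_j, j = 1,…,k, solve the system ρ_j'(t) + ρ_j(t)/(2t) − β e^{−√2(ρ_{j+1}(t) − ρ_j(t))} + β e^{−√2(ρ_j(t) − ρ_{j−1}(t))} = γ_j/(2t) on (−∞,−1], with the conventions ρ_{k+1} = +∞ and ρ₀ = −∞ (so the corresponding exponential terms vanish for j = k and j = 1). -/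
open MeasureTheory Real Filter Set Topology

noncomputable section

/-- The heteroclinic profile `w(s) = tanh(s/√2)`. -/
def w (s : ℝ) : ℝ := Real.tanh (s / Real.sqrt 2)

/-- The Allen-Cahn nonlinearity `f(u) = (1-u²)u`. -/
def f (u : ℝ) : ℝ := (1 - u ^ 2) * u

/-- `f'(u) = 1 - 3u²`. -/
def fp (u : ℝ) : ℝ := 1 - 3 * u ^ 2

/-- The interaction constant β. -/
def β : ℝ :=
  6 * (∫ x : ℝ, Real.exp (Real.sqrt 2 * x) * (1 - w x ^ 2) * deriv w x) /
    ∫ x : ℝ, deriv w x ^ 2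

/-- The constants `b_l`. -/
def bcoef (k l : ℕ) : ℝ :=
  -(1 / Real.sqrt 2) * Real.log (((k : ℝ) - (l : ℝ)) * (l : ℝ) / (2 * β))

/-- The constants `γ_j`, determined by `γ_{k-j+1} = -γ_j = (1/2)∑_{i=j}^{k-j} b_i` for `j ≤ k/2`. -/
def γcoef (k j : ℕ) : ℝ :=
  if j ≤ k / 2 then -(1 / 2) * ∑ i ∈ Finset.Icc j (k - j), bcoef k i
  else (1 / 2) * ∑ i ∈ Finset.Icc (k - j + 1) (j - 1), bcoef k i

/-- `ρ_j⁰(t) = √(-2(n-1)t) + (j-(k+1)/2) η(t) + γ_j`. -/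
def ρ0 (n k : ℕ) (η : ℝ → ℝ) (j : ℕ) (t : ℝ) : ℝ :=
  Real.sqrt (-2 * ((n : ℝ) - 1) * t) + ((j : ℝ) - ((k : ℝ) + 1) / 2) * η t + γcoef k j

/-- `ρ_j⁰` extended by the convention `ρ₀⁰ = ρ₁⁰ - η`. -/
def ρ0e (n k : ℕ) (η : ℝ → ℝ) (j : ℕ) (t : ℝ) : ℝ :=
  if j = 0 then ρ0 n k η 1 t - η t else ρ0 n k η j t

/-- `ρ_j = ρ_j⁰ + h_j`. -/
def ρf (n k : ℕ) (η : ℝ → ℝ) (h : ℕ → ℝ → ℝ) (j : ℕ) (t : ℝ) : ℝ :=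
  ρ0 n k η j t + h j t

/-- `z(t,r) = ∑_{j=1}^k (-1)^{j+1} w(r - ρ_j(t)) - 1`. -/
def zf (n k : ℕ) (η : ℝ → ℝ) (h : ℕ → ℝ → ℝ) (t r : ℝ) : ℝ :=
  (∑ j ∈ Finset.Icc 1 k, (-1 : ℝ) ^ (j + 1) * w (r - ρf n k η h j t)) - 1

/-- The error term `E`. -/
def Ef (n k : ℕ) (η : ℝ → ℝ) (h : ℕ → ℝ → ℝ) (t r : ℝ) : ℝ :=
  (∑ j ∈ Finset.Icc 1 k, (-1 : ℝ) ^ (j + 1) *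
      (deriv w (r - ρf n k η h j t) * deriv (ρf n k η h j) t +
        ((n : ℝ) - 1) / r * deriv w (r - ρf n k η h j t))) +
    f (zf n k η h t r) -
    ∑ j ∈ Finset.Icc 1 k, (-1 : ℝ) ^ (j + 1) * f (w (r - ρf n k η h j t))

/-- The nonlinear term `N(ψ) = f(z+ψ) - f(z) - f'(z)ψ`. -/
def Nf (n k : ℕ) (η : ℝ → ℝ) (h : ℕ → ℝ → ℝ) (ψ : ℝ → ℝ → ℝ) (t r : ℝ) : ℝ :=
  f (zf n k η h t r + ψ t r) - f (zf n k η h t r) - fp (zf n k η h t r) * ψ t r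

/-- The piecewise description of the weight `Φ`. -/
def PhiSpec (n k : ℕ) (σ : ℝ) (η : ℝ → ℝ) (Φ : ℝ → ℝ → ℝ) : Prop :=
  (∀ t r : ℝ, r ≤ (ρ0e n k η 0 t + ρ0e n k η 1 t) / 2 →
      Φ t r = Real.exp (σ * (r - ρ0 n k η 1 t))) ∧
    (∀ t r : ℝ, (ρ0e n k η 0 t + ρ0e n k η 1 t) / 2 ≤ r →
      r ≤ (ρ0 n k η 1 t + ρ0 n k η 2 t) / 2 →
      Φ t r = Real.exp (σ * (r - ρ0 n k η 2 t))) ∧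
    (∀ j : ℕ, 2 ≤ j → j < k → ∀ t r : ℝ,
      (ρ0 n k η j t + ρ0 n k η (j - 1) t) / 2 ≤ r →
      r ≤ (ρ0 n k η j t + ρ0 n k η (j + 1) t) / 2 →
      Φ t r =
        Real.exp (σ * (ρ0 n k η (j - 1) t - r)) + Real.exp (σ * (r - ρ0 n k η (j + 1) t))) ∧
    ∀ t r : ℝ, (ρ0 n k η k t + ρ0 n k η (k - 1) t) / 2 ≤ r →
      Φ t r = Real.exp (σ * (ρ0 n k η (k - 1) t - r))

/-- The class of admissible perturbations `h` on `(-∞, τ]`: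
`h ∈ C¹` and `sup |h| + sup (|t|/log|t|)|h'| < 1`. -/
def hSpec (k : ℕ) (τ : ℝ) (h h' : ℕ → ℝ → ℝ) : Prop :=
  (∀ j ∈ Finset.Icc 1 k, ∀ t ≤ τ, HasDerivAt (h j) (h' j t) t) ∧
    (∀ j ∈ Finset.Icc 1 k, ContinuousOn (h' j) (Set.Iic τ)) ∧
    ∃ a b : ℝ, a + b < 1 ∧
      (∀ t ≤ τ, Real.sqrt (∑ j ∈ Finset.Icc 1 k, h j t ^ 2) ≤ a) ∧
      ∀ t ≤ τ, |t| / Real.log |t| * Real.sqrt (∑ j ∈ Finset.Icc 1 k, h' j t ^ 2) ≤ b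

/-- The weighted sup norm `‖u‖_{C_Φ(S)} = ‖u/Φ‖_{L^∞(S)}`. -/
def cnorm (Φ u : ℝ → ℝ → ℝ) (S : Set (ℝ × ℝ)) : ℝ :=
  sSup ((fun p : ℝ × ℝ => |u p.1 p.2| / Φ p.1 p.2) '' S)

/-- Membership in the space `C_Φ(S)`: continuity and finiteness of the norm. -/
def memC (Φ u : ℝ → ℝ → ℝ) (S : Set (ℝ × ℝ)) : Prop :=
  ContinuousOn (fun p : ℝ × ℝ => u p.1 p.2) S ∧
    BddAbove ((fun p : ℝ × ℝ => |u p.1 p.2| / Φ p.1 p.2) '' S)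

/-- The parabolic region `(s,t) × (0,∞)`. -/
def QS (s t : ℝ) : Set (ℝ × ℝ) := Set.Ioo s t ×ˢ Set.Ioi 0

/-- The parabolic region `(-∞,t) × (0,∞)`. -/
def QI (t : ℝ) : Set (ℝ × ℝ) := Set.Iio t ×ˢ Set.Ioi 0

/-- The norm of the space Λ. -/
def lamNorm (k : ℕ) (T₀ : ℝ) (h h' : ℕ → ℝ → ℝ) : ℝ :=
  sSup ((fun t => Real.sqrt (∑ j ∈ Finset.Icc 1 k, h j t ^ 2)) '' Set.Iic (-T₀)) +
    sSup ((fun t => |t| / Real.log |t| * Real.sqrt (∑ j ∈ Finset.Icc 1 k, h' j t ^ 2)) ''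
      Set.Iic (-T₀))

/-- Membership in the set Λ. -/
def lamMem (k : ℕ) (T₀ : ℝ) (h h' : ℕ → ℝ → ℝ) : Prop :=
  (∀ j ∈ Finset.Icc 1 k, ∀ t ≤ -T₀, HasDerivAt (h j) (h' j t) t) ∧
    (∀ j ∈ Finset.Icc 1 k, ContinuousOn (h' j) (Set.Iic (-T₀))) ∧
    BddAbove ((fun t => Real.sqrt (∑ j ∈ Finset.Icc 1 k, h j t ^ 2)) '' Set.Iic (-T₀)) ∧
    BddAbove ((fun t => |t| / Real.log |t| * Real.sqrt (∑ j ∈ Finset.Icc 1 k, h' j t ^ 2)) ''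
      Set.Iic (-T₀)) ∧
    lamNorm k T₀ h h' < 1

/-- The ODE `η' + η/(2t) + e^{-√2 η} = 0` on `(-∞,-1]`, `η(-1) = 0`. -/
def etaODE (η : ℝ → ℝ) : Prop :=
  η (-1) = 0 ∧
    ∀ t ≤ (-1 : ℝ), HasDerivAt η (-(η t / (2 * t)) - Real.exp (-(Real.sqrt 2) * η t)) t

/-- Partial derivative in time. -/
def dT (ψ : ℝ → ℝ → ℝ) (t r : ℝ) : ℝ := deriv (fun τ => ψ τ r) t

/-- Partial derivative in the radial variable. -/
def dR (ψ : ℝ → ℝ → ℝ) (t r : ℝ) : ℝ := deriv (ψ t) r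

/-- Second partial derivative in the radial variable. -/
def dRR (ψ : ℝ → ℝ → ℝ) (t r : ℝ) : ℝ := deriv (deriv (ψ t)) r

/-- `ρ̃_j⁰(t) = (j - (k+1)/2) η(t) + γ_j`. -/
def ρt13 (k : ℕ) (η : ℝ → ℝ) (j : ℕ) (t : ℝ) : ℝ :=
  ((j : ℝ) - ((k : ℝ) + 1) / 2) * η t + γcoef k j

/-! Writing `b_l` for `bcoef k l`, the symmetry `b_{k-l} = b_l` gives `γ_{j+1} - γ_j = b_j` for
every `k`, so the gaps of the ansatz are `ρ̃_{j+1} - ρ̃_j = η + b_j`. Since `β > 0` (the integrands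
are positive, and integrable because `1 - w² = sech²(·/√2)` decays like `e^{-√2|s|}`), the
definition of `b_l` gives `β e^{-√2 b_l} = (k-l)l/2`, so the two interaction terms are
`e^{-√2 η}(k-j)j/2` and `e^{-√2 η}(k-j+1)(j-1)/2`. Their difference `(k+1)/2 - j` is the
coefficient of `η` in `ρ̃_j`, and the system reduces to the equation for `η`. -/

lemma one_sub_tanh_sq (x : ℝ) : 1 - tanh x ^ 2 = (cosh x ^ 2)⁻¹ := by
  have h := cosh_sq_sub_sinh_sq x
  have := cosh_pos x
  rw [tanh_eq_sinh_div_cosh, div_pow]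
  field_simp
  linarith

lemma hasDerivAt_tanh (x : ℝ) : HasDerivAt tanh (1 - tanh x ^ 2) x := by
  have h := (hasDerivAt_sinh x).div (hasDerivAt_cosh x) (cosh_pos x).ne'
  rw [show sinh / cosh = tanh from funext fun y => (tanh_eq_sinh_div_cosh y).symm] at h
  refine h.congr_deriv ?_
  rw [one_sub_tanh_sq, ← sq, ← sq, cosh_sq_sub_sinh_sq, one_div]

lemma one_sub_tanh_sq_le (x : ℝ) : 1 - tanh x ^ 2 ≤ 4 * exp (-(2 * |x|)) := by
  have hcosh : exp |x| / 2 ≤ cosh x := by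
    rw [← cosh_abs, cosh_eq]
    linarith [exp_pos (-|x|)]
  have hsq : (exp |x| / 2) ^ 2 ≤ cosh x ^ 2 := pow_le_pow_left₀ (by positivity) hcosh 2
  calc 1 - tanh x ^ 2 = (cosh x ^ 2)⁻¹ := one_sub_tanh_sq x
    _ ≤ ((exp |x| / 2) ^ 2)⁻¹ := inv_anti₀ (by positivity) hsq
    _ = 4 * exp (-(2 * |x|)) := by
      rw [div_pow, ← exp_nat_mul, exp_neg, inv_div]
      push_cast
      ring

lemma hasDerivAt_w (s : ℝ) : HasDerivAt w ((1 - w s ^ 2) / √2) s :=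
  ((hasDerivAt_tanh (s / √2)).comp s ((hasDerivAt_id s).div_const √2)).congr_deriv
    (by simp only [w]; ring)

lemma deriv_w (s : ℝ) : deriv w s = (1 - w s ^ 2) / √2 := (hasDerivAt_w s).deriv

@[fun_prop]
lemma continuous_w : Continuous w :=
  continuous_iff_continuousAt.2 fun s => (hasDerivAt_w s).continuousAt

lemma one_sub_w_sq_pos (s : ℝ) : 0 < 1 - w s ^ 2 := by
  rw [w, one_sub_tanh_sq]
  have := cosh_pos (s / √2)
  positivity

lemma one_sub_w_sq_le (s : ℝ) : 1 - w s ^ 2 ≤ 4 * exp (-(√2 * |s|)) := by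
  have h2 : 2 * |s / √2| = √2 * |s| := by
    rw [abs_div, abs_of_pos (by positivity : (0 : ℝ) < √2)]
    field_simp
    rw [sq_sqrt zero_le_two]
    ring
  simpa only [w, h2] using one_sub_tanh_sq_le (s / √2)

lemma integrable_exp_neg_mul_abs {a : ℝ} (ha : 0 < a) :
    Integrable (fun x : ℝ => exp (-(a * |x|))) := by
  have hIic : IntegrableOn (fun x : ℝ => exp (-(a * |x|))) (Iic 0) :=
    (integrableOn_exp_mul_Iic ha 0).congr_fun
      (fun x (hx : x ≤ 0) => by simp only [abs_of_nonpos hx]; ring_nf) measurableSet_Iic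
  have hIoi : IntegrableOn (fun x : ℝ => exp (-(a * |x|))) (Ioi 0) :=
    (exp_neg_integrableOn_Ioi 0 ha).congr_fun
      (fun x (hx : 0 < x) => by simp only [abs_of_pos hx]; ring_nf) measurableSet_Ioi
  rw [← integrableOn_univ, ← Iic_union_Ioi (a := (0 : ℝ))]
  exact hIic.union hIoi

lemma integrable_one_sub_w_sq : Integrable (fun s => 1 - w s ^ 2) := by
  refine ((integrable_exp_neg_mul_abs (Real.sqrt_pos.2 zero_lt_two)).const_mul 4).mono
    (by fun_prop : Continuous fun s => 1 - w s ^ 2).aestronglyMeasurable ?_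
  filter_upwards with s
  rw [norm_of_nonneg (one_sub_w_sq_pos s).le, norm_of_nonneg (by positivity)]
  exact one_sub_w_sq_le s

lemma exp_mul_one_sub_w_sq_le (s : ℝ) : exp (√2 * s) * (1 - w s ^ 2) ≤ 4 := by
  calc exp (√2 * s) * (1 - w s ^ 2) ≤ exp (√2 * |s|) * (4 * exp (-(√2 * |s|))) := by
        exact mul_le_mul (exp_le_exp.2 (by gcongr; exact le_abs_self s)) (one_sub_w_sq_le s)
          (one_sub_w_sq_pos s).le (exp_pos _).le
    _ = 4 := by rw [mul_left_comm, ← exp_add, add_neg_cancel, exp_zero, mul_one]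

lemma β_pos : 0 < β := by
  have hnum : 0 < ∫ x : ℝ, exp (√2 * x) * (1 - w x ^ 2) * deriv w x := by
    simp only [deriv_w]
    refine integral_pos_of_integrable_nonneg_nonzero (x := 0) (by fun_prop) ?_
      (fun x => by have := one_sub_w_sq_pos x; positivity)
      (by have := one_sub_w_sq_pos 0; positivity)
    refine (integrable_one_sub_w_sq.const_mul (4 / √2)).mono (by fun_prop) ?_
    filter_upwards with x
    have h₁ := one_sub_w_sq_pos x
    have h₂ := exp_mul_one_sub_w_sq_le x
    rw [norm_of_nonneg (by positivity), norm_of_nonneg (by positivity), div_mul_eq_mul_div,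
      mul_div_assoc]
    gcongr
  have hden : 0 < ∫ x : ℝ, deriv w x ^ 2 := by
    simp only [deriv_w]
    refine integral_pos_of_integrable_nonneg_nonzero (x := 0) (by fun_prop) ?_
      (fun x => by positivity) (by have := one_sub_w_sq_pos 0; positivity)
    refine (integrable_one_sub_w_sq.div_const 2).mono (by fun_prop) ?_
    filter_upwards with x
    have h₁ := one_sub_w_sq_pos x
    have h₂ : 1 - w x ^ 2 ≤ 1 := by nlinarith [sq_nonneg (w x)]
    rw [norm_of_nonneg (by positivity), norm_of_nonneg (by positivity), div_pow,
      sq_sqrt zero_le_two]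
    gcongr
    nlinarith
  rw [β]
  positivity

lemma Finset.sum_Icc_eq_add_sum_Icc_add {M : Type*} [AddCommMonoid M] (f : ℕ → M) {a b : ℕ}
    (h : a < b) : ∑ i ∈ Icc a b, f i = f a + ∑ i ∈ Icc (a + 1) (b - 1), f i + f b := by
  have hab : Icc a b = insert a (insert b (Icc (a + 1) (b - 1))) := by
    ext x; simp only [Finset.mem_Icc, Finset.mem_insert]; omega
  rw [hab, Finset.sum_insert (by simp only [Finset.mem_Icc, Finset.mem_insert]; omega),
    Finset.sum_insert (by simp only [Finset.mem_Icc]; omega), add_comm (f b), add_assoc]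

lemma bcoef_sub_index {k l : ℕ} (hl : l ≤ k) : bcoef k (k - l) = bcoef k l := by
  rw [bcoef, bcoef, Nat.cast_sub hl, sub_sub_cancel, mul_comm ((k : ℝ) - l)]

lemma β_mul_exp_bcoef {k l : ℕ} (hl : 1 ≤ l) (hlk : l < k) :
    β * exp (-√2 * bcoef k l) = ((k : ℝ) - l) * l / 2 := by
  have hl' : (1 : ℝ) ≤ l := by exact_mod_cast hl
  have hlk' : (l : ℝ) < k := by exact_mod_cast hlk
  have hβ := β_pos
  have hlog : -√2 * bcoef k l = log (((k : ℝ) - l) * l / (2 * β)) := by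
    rw [bcoef]
    field_simp
  rw [hlog, exp_log (by apply div_pos <;> nlinarith)]
  field_simp

lemma γcoef_succ_sub {k j : ℕ} (hjk : j < k) :
    γcoef k (j + 1) - γcoef k j = bcoef k j := by
  rcases lt_trichotomy j (k / 2) with hj | rfl | hj
  · rw [γcoef, γcoef, if_pos (by omega), if_pos (by omega),
      Finset.sum_Icc_eq_add_sum_Icc_add _ (by omega : j < k - j), Nat.sub_add_eq,
      bcoef_sub_index hjk.le]
    ring
  · rw [γcoef, γcoef, if_neg (by omega), if_pos le_rfl, Nat.add_sub_cancel]
    obtain ⟨m, rfl | rfl⟩ := Nat.even_or_odd' k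
    · rw [show 2 * m / 2 = m by omega, show 2 * m - (m + 1) + 1 = m by omega,
        show 2 * m - m = m by omega, Finset.Icc_self, Finset.sum_singleton]
      ring
    · have hsymm := bcoef_sub_index (k := 2 * m + 1) (l := m) (by omega)
      rw [show 2 * m + 1 - m = m + 1 by omega] at hsymm
      rw [show (2 * m + 1) / 2 = m by omega, show 2 * m + 1 - (m + 1) + 1 = m + 1 by omega,
        show 2 * m + 1 - m = m + 1 by omega, Finset.Icc_eq_empty (by omega), Finset.sum_empty,
        Finset.sum_Icc_eq_add_sum_Icc_add _ (by omega : m < m + 1),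
        Finset.Icc_eq_empty (by omega), Finset.sum_empty, hsymm]
      ring
  · rw [γcoef, γcoef, if_neg (by omega), if_neg (by omega), Nat.add_sub_cancel,
      show k - (j + 1) + 1 = k - j by omega,
      Finset.sum_Icc_eq_add_sum_Icc_add _ (by omega : k - j < j), bcoef_sub_index hjk.le]
    ring

lemma ρt13_succ_sub (k : ℕ) (η : ℝ → ℝ) {j : ℕ} (hjk : j < k) (t : ℝ) :
    ρt13 k η (j + 1) t - ρt13 k η j t = η t + bcoef k j := by
  rw [ρt13, ρt13, ← γcoef_succ_sub hjk]
  push_cast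
  ring

lemma β_mul_exp_ρt13_gap (k : ℕ) (η : ℝ → ℝ) {j : ℕ} (hj : 1 ≤ j) (hjk : j ≤ k) (t : ℝ) :
    β * (if j = k then 0 else exp (-√2 * (ρt13 k η (j + 1) t - ρt13 k η j t))) =
      exp (-√2 * η t) * (((k : ℝ) - j) * j / 2) := by
  split_ifs with hj_eq
  · simp [hj_eq]
  · rw [ρt13_succ_sub k η (by omega) t, mul_add, exp_add, mul_left_comm,
      β_mul_exp_bcoef hj (by omega)]

lemma β_mul_exp_ρt13_gap_pred (k : ℕ) (η : ℝ → ℝ) {j : ℕ} (hj : 1 ≤ j) (hjk : j ≤ k)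
    (t : ℝ) :
    β * (if j = 1 then 0 else exp (-√2 * (ρt13 k η j t - ρt13 k η (j - 1) t))) =
      exp (-√2 * η t) * (((k : ℝ) - (j - 1)) * (j - 1) / 2) := by
  split_ifs with hj_eq
  · simp [hj_eq]
  · obtain ⟨i, rfl⟩ : ∃ i, j = i + 1 := ⟨j - 1, by omega⟩
    have hgap := β_mul_exp_ρt13_gap k η (j := i) (by omega) (by omega) t
    rw [if_neg (by omega)] at hgap
    rw [Nat.add_sub_cancel, hgap]
    push_cast
    ring

lemma hasDerivAt_ρt13 (k : ℕ) {η : ℝ → ℝ} (hη : etaODE η) (j : ℕ) {t : ℝ} (ht : t ≤ -1) :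
    HasDerivAt (ρt13 k η j)
      (((j : ℝ) - ((k : ℝ) + 1) / 2) * (-(η t / (2 * t)) - exp (-√2 * η t))) t :=
  ((hη.2 t ht).const_mul _).add_const _

theorem stmt13_general (k : ℕ)
    (η : ℝ → ℝ) (hη : etaODE η) :
    ∀ j ∈ Finset.Icc 1 k, ∀ t ≤ (-1 : ℝ),
      deriv (ρt13 k η j) t + ρt13 k η j t / (2 * t) -
          β * (if j = k then 0
            else Real.exp (-(Real.sqrt 2) * (ρt13 k η (j + 1) t - ρt13 k η j t))) +
          β * (if j = 1 then 0
            else Real.exp (-(Real.sqrt 2) * (ρt13 k η j t - ρt13 k η (j - 1) t))) =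
        γcoef k j / (2 * t) := by
  intro j hj t ht
  obtain ⟨hj1, hjk⟩ := Finset.mem_Icc.1 hj
  have ht0 : t ≠ 0 := by linarith
  rw [(hasDerivAt_ρt13 k hη j ht).deriv, β_mul_exp_ρt13_gap k η hj1 hjk t,
    β_mul_exp_ρt13_gap_pred k η hj1 hjk t, ρt13]
  field_simp
  ring

/-- **Lemma 5.2.** The functions `ρ̃_j⁰ = (j-(k+1)/2)η + γ_j` solve the
Toda-type system `ρ_j' + ρ_j/(2t) - β e^{-√2(ρ_{j+1}-ρ_j)} + β e^{-√2(ρ_j-ρ_{j-1})} = γ_j/(2t)`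
on `(-∞,-1]`, with the conventions `ρ_{k+1} = +∞`, `ρ₀ = -∞`. -/
theorem stmt13 (k : ℕ) (hk : 2 ≤ k) (hkeven : Even k)
    (η : ℝ → ℝ) (hη : etaODE η) :
    ∀ j ∈ Finset.Icc 1 k, ∀ t ≤ (-1 : ℝ),
      deriv (ρt13 k η j) t + ρt13 k η j t / (2 * t) -
          β * (if j = k then 0
            else Real.exp (-(Real.sqrt 2) * (ρt13 k η (j + 1) t - ρt13 k η j t))) +
          β * (if j = 1 then 0
            else Real.exp (-(Real.sqrt 2) * (ρt13 k η j t - ρt13 k η (j - 1) t))) =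
        γcoef k j / (2 * t) :=
  stmt13_general k η hη
end
end

section
/- Let g(t) = exp( (1/2) ∫_t^{−T̃₀} e^{−√2 η(s)} ds ) for t ≤ −T̃₀. Then for all T₀ > T̃₀ sufficiently large there exists a constant C = C(T̃₀) such that for every t ≤ −T₀: (1/(√(−t) g(t))) ∫_t^{−T₀} (√(−s) g(s) / (−s)) ds ≤ (1/g(t)) ∫_t^{−T₀} (g(s)/(−s)) ds ≤ C / log T₀. -/
open MeasureTheory Real Filter Set Topology

noncomputable section

/-- `g(t) = exp((1/2) ∫_t^{-T̃₀} e^{-√2 η(s)} ds)`. -/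
def gaux (η : ℝ → ℝ) (Tt : ℝ) (t : ℝ) : ℝ :=
  Real.exp ((1 / 2) * ∫ s in t..(-Tt), Real.exp (-(Real.sqrt 2) * η s))

/-! Since `g' = -½ e^{-√2 η} g`, the integrand `e^{-√2 η} g` of the comparison integral is an
exact derivative, so `∫_t^{-T₀} e^{-√2 η} g ≤ 2 g(t)`. The lower bound on `e^{-√2 η}` gives
`1/(-s) ≤ C e^{-√2 η(s)} / log(-s) ≤ C e^{-√2 η(s)} / log T₀` for `s ≤ -T₀`, which turns
`∫_t^{-T₀} g(s)/(-s) ds` into that exact integral; the first inequality only uses `√(-s) ≤ √(-t)`. -/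

open intervalIntegral

theorem inv_neg_le_of_inv_mul_log_div_abs_le {K T s φ : ℝ} (hK : 0 < K) (hT : 1 < T)
    (hs : s ≤ -T) (hφ : K⁻¹ * (log |s| / |s|) ≤ φ) : (-s)⁻¹ ≤ K / log T * φ := by
  have hs₀ : 0 < -s := by linarith
  rw [abs_of_neg (by linarith), inv_mul_le_iff₀ hK, div_le_iff₀ hs₀] at hφ
  have hlog : log T ≤ log (-s) := log_le_log (by linarith) (by linarith)
  rw [div_mul_eq_mul_div, le_div_iff₀ (log_pos hT), inv_mul_le_iff₀ hs₀]
  linarith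

theorem integral_sqrt_neg_mul_le {H : ℝ → ℝ} {t b : ℝ} (htb : t ≤ b)
    (hH : IntervalIntegrable H volume t b) (hH₀ : ∀ s ∈ Icc t b, 0 ≤ H s) :
    ∫ s in t..b, √(-s) * H s ≤ √(-t) * ∫ s in t..b, H s := by
  rw [← intervalIntegral.integral_const_mul]
  refine integral_mono_on htb ?_ (hH.const_mul _) fun s hs => ?_
  · exact hH.continuousOn_mul (continuous_neg.sqrt).continuousOn
  · exact mul_le_mul_of_nonneg_right (sqrt_le_sqrt (by linarith [hs.1])) (hH₀ s hs)

section IntegratingFactor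

variable {F : ℝ → ℝ} {a b c : ℝ}

theorem hasDerivAt_exp_mul_integral (hF : ContinuousOn F (Iio b)) (hab : a < b) {u : ℝ}
    (hu : u ≤ a) :
    HasDerivAt (fun x => exp (c * ∫ s in x..a, F s))
      (-(c * F u) * exp (c * ∫ s in u..a, F s)) u := by
  have hint : IntervalIntegrable F volume u a :=
    (hF.mono fun x hx => by rw [uIcc_of_le hu] at hx; exact hx.2.trans_lt hab).intervalIntegrable
  have hu' : u ∈ Iio b := hu.trans_lt hab
  have hderiv := ((integral_hasDerivAt_left hint
    (hF.stronglyMeasurableAtFilter isOpen_Iio u hu') (hF.continuousAt (Iio_mem_nhds hu'))).const_mul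
    c).exp
  convert hderiv using 1
  ring

theorem continuousOn_exp_mul_integral (hF : ContinuousOn F (Iio b)) (hab : a < b) :
    ContinuousOn (fun x => exp (c * ∫ s in x..a, F s)) (Iic a) := fun _ hu =>
  (hasDerivAt_exp_mul_integral hF hab hu).continuousAt.continuousWithinAt

theorem intervalIntegrable_exp_mul_integral_div_neg (hF : ContinuousOn F (Iio b)) (hab : a < b)
    {t T : ℝ} (htT : t ≤ T) (hTa : T ≤ a) (hT : T < 0) :
    IntervalIntegrable (fun s => exp (c * ∫ r in s..a, F r) / (-s)) volume t T := by
  rw [intervalIntegrable_iff_integrableOn_Icc_of_le htT]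
  refine (((continuousOn_exp_mul_integral hF hab).mono fun s hs => hs.2.trans hTa).div
    continuousOn_neg fun s hs => ?_).integrableOn_Icc
  linarith [hs.2]

theorem integral_mul_exp_mul_integral_le (hF : ContinuousOn F (Iio b)) (hab : a < b) {t T : ℝ}
    (htT : t ≤ T) (hTa : T ≤ a) :
    ∫ s in t..T, c * F s * exp (c * ∫ r in s..a, F r) ≤ exp (c * ∫ r in t..a, F r) := by
  have hsub : uIcc t T ⊆ Iic a := by rw [uIcc_of_le htT]; exact fun s hs => hs.2.trans hTa
  have hcont : ContinuousOn (fun s => c * F s * exp (c * ∫ r in s..a, F r)) (uIcc t T) :=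
    ((continuousOn_const.mul hF).mono fun s hs => (hsub hs).trans_lt hab).mul
      ((continuousOn_exp_mul_integral hF hab).mono hsub)
  rw [integral_eq_sub_of_hasDerivAt (f := fun x => -exp (c * ∫ r in x..a, F r))
    (fun s hs => (hasDerivAt_exp_mul_integral hF hab (hsub hs)).neg.congr_deriv (by ring))
    hcont.intervalIntegrable]
  linarith [exp_pos (c * ∫ r in T..a, F r)]

theorem integral_exp_mul_integral_div_neg_le (hF : ContinuousOn F (Iio b)) (hab : a < b)
    (hc : 0 < c) {K T t : ℝ} (hK : 0 < K) (hT : 1 < T) (hTa : -T ≤ a) (ht : t ≤ -T)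
    (hlow : ∀ s ≤ -T, K⁻¹ * (log |s| / |s|) ≤ F s) :
    ∫ s in t..-T, exp (c * ∫ r in s..a, F r) / (-s) ≤
      K / (c * log T) * exp (c * ∫ r in t..a, F r) := by
  have hsub : uIcc t (-T) ⊆ Iic a := by rw [uIcc_of_le ht]; exact fun s hs => hs.2.trans hTa
  have hG := (continuousOn_exp_mul_integral (c := c) hF hab).mono hsub
  have hF' : ContinuousOn F (uIcc t (-T)) := hF.mono fun s hs => (hsub hs).trans_lt hab
  have hpointwise : ∀ s ∈ Icc t (-T), exp (c * ∫ r in s..a, F r) / (-s) ≤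
      K / (c * log T) * (c * F s * exp (c * ∫ r in s..a, F r)) := fun s hs => by
    have hinv := inv_neg_le_of_inv_mul_log_div_abs_le hK hT hs.2 (hlow s hs.2)
    rw [div_eq_inv_mul]
    calc (-s)⁻¹ * exp (c * ∫ r in s..a, F r)
        ≤ K / log T * F s * exp (c * ∫ r in s..a, F r) :=
          mul_le_mul_of_nonneg_right hinv (exp_pos _).le
      _ = K / (c * log T) * (c * F s * exp (c * ∫ r in s..a, F r)) := by
        field_simp
  calc ∫ s in t..-T, exp (c * ∫ r in s..a, F r) / (-s)
      ≤ ∫ s in t..-T, K / (c * log T) * (c * F s * exp (c * ∫ r in s..a, F r)) := by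
        refine integral_mono_on ht ?_ ?_ hpointwise
        · exact intervalIntegrable_exp_mul_integral_div_neg hF hab ht hTa (by linarith)
        · exact ((continuousOn_const.mul hF').mul hG).intervalIntegrable.const_mul _
    _ ≤ K / (c * log T) * exp (c * ∫ r in t..a, F r) := by
        rw [intervalIntegral.integral_const_mul]
        have : 0 ≤ K / (c * log T) := by have := log_pos hT; positivity
        gcongr
        exact integral_mul_exp_mul_integral_le hF hab ht hTa

end IntegratingFactor

theorem etaODE.continuousAt {η : ℝ → ℝ} (hη : etaODE η) {t : ℝ} (ht : t ≤ -1) :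
    ContinuousAt η t :=
  (hη.2 t ht).continuousAt

theorem stmt15_general (η : ℝ → ℝ) (hη : etaODE η) (Tt C : ℝ) (hTt : 1 < Tt) (hC : 0 < C)
    (hlow : ∀ t ≤ -Tt, C⁻¹ * (Real.log |t| / |t|) ≤ Real.exp (-(Real.sqrt 2) * η t)) :
    ∃ C' > (0 : ℝ), ∃ T₁ ≥ Tt, ∀ T₀ ≥ T₁, ∀ t ≤ -T₀,
      (1 / (Real.sqrt (-t) * gaux η Tt t)) *
          (∫ s in t..(-T₀), Real.sqrt (-s) * gaux η Tt s / (-s)) ≤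
        (1 / gaux η Tt t) * ∫ s in t..(-T₀), gaux η Tt s / (-s) ∧
      (1 / gaux η Tt t) * (∫ s in t..(-T₀), gaux η Tt s / (-s)) ≤ C' / Real.log T₀ := by
  have hF : ContinuousOn (fun s => exp (-√2 * η s)) (Iio (-1)) := fun s hs =>
    ((hη.continuousAt hs.le).const_mul _).rexp.continuousWithinAt
  have hTt' : -Tt < -1 := by linarith
  refine ⟨2 * C, by positivity, Tt, le_rfl, fun T₀ hT₀ t ht => ?_⟩
  have hg : 0 < gaux η Tt t := exp_pos _
  have hB : ∫ s in t..(-T₀), gaux η Tt s / (-s) ≤ C / (1 / 2 * log T₀) * gaux η Tt t :=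
    integral_exp_mul_integral_div_neg_le hF hTt' one_half_pos hC (by linarith) (by linarith) ht
      fun s hs => hlow s (by linarith)
  have hint : IntervalIntegrable (fun s => gaux η Tt s / -s) volume t (-T₀) :=
    intervalIntegrable_exp_mul_integral_div_neg hF hTt' ht (by linarith) (by linarith)
  have hA : ∫ s in t..(-T₀), √(-s) * gaux η Tt s / (-s) ≤
      √(-t) * ∫ s in t..(-T₀), gaux η Tt s / (-s) := by
    simpa only [mul_div_assoc] using integral_sqrt_neg_mul_le ht hint
      fun s hs => div_nonneg (exp_pos _).le (by linarith [hs.2])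
  have hsqrt : 0 < √(-t) := sqrt_pos.2 (by linarith)
  constructor
  · calc 1 / (√(-t) * gaux η Tt t) * ∫ s in t..-T₀, √(-s) * gaux η Tt s / -s
        ≤ 1 / (√(-t) * gaux η Tt t) * (√(-t) * ∫ s in t..-T₀, gaux η Tt s / -s) := by gcongr
      _ = 1 / gaux η Tt t * ∫ s in t..-T₀, gaux η Tt s / -s := by field_simp
  · calc 1 / gaux η Tt t * ∫ s in t..-T₀, gaux η Tt s / -s
        ≤ 1 / gaux η Tt t * (C / (1 / 2 * log T₀) * gaux η Tt t) := by gcongr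
      _ = 2 * C / log T₀ := by field_simp

/-- **estimate (5.23).** For `T₀ > T̃₀` large enough there is `C' = C'(T̃₀)`
with `(1/(√(-t) g(t))) ∫_t^{-T₀} √(-s) g(s)/(-s) ds ≤ (1/g(t)) ∫_t^{-T₀} g(s)/(-s) ds ≤ C'/log T₀`
for all `t ≤ -T₀`. -/
theorem stmt15 (η : ℝ → ℝ) (hη : etaODE η) (Tt C : ℝ) (hTt : 1 < Tt) (hC : 0 < C)
    (hlow : ∀ t ≤ -Tt, C⁻¹ * (Real.log |t| / |t|) ≤ Real.exp (-(Real.sqrt 2) * η t))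
    (hup : ∀ t ≤ -Tt, Real.exp (-(Real.sqrt 2) * η t) ≤ C * (Real.log |t| / |t|)) :
    ∃ C' > (0 : ℝ), ∃ T₁ ≥ Tt, ∀ T₀ ≥ T₁, ∀ t ≤ -T₀,
      (1 / (Real.sqrt (-t) * gaux η Tt t)) *
          (∫ s in t..(-T₀), Real.sqrt (-s) * gaux η Tt s / (-s)) ≤
        (1 / gaux η Tt t) * ∫ s in t..(-T₀), gaux η Tt s / (-s) ∧
      (1 / gaux η Tt t) * (∫ s in t..(-T₀), gaux η Tt s / (-s)) ≤ C' / Real.log T₀ :=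
  stmt15_general η hη Tt C hTt hC hlow
end
end
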